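/- Let p be a prime, let m, k be integers, and let r ≥ 1 be an integer. Then binom(p^r·m - 1, k)·(-1)^k ≡ binom(p^{r-1}·m - 1, ⌊k/p⌋)·(-1)^{⌊k/p⌋} (mod p^r), where ⌊k/p⌋ denotes the floor of k/p (floor division of integers). -/

import Mathlib

/-!
Write `N = p n` and `q = ⌊k/p⌋`. For `k ≥ 0`, `k! (-1)^k C(N - 1, k) = ∏_{i=1}^k (i - N)`.
Splitting this product and `k! = ∏_{i=1}^k i` into the factors with `p ∤ i` and the multiples
`i = p j`, `j ≤ q`, gives `B · (-1)^k C(N - 1, k) = A · (-1)^q C(n - 1, q)` with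
`B = ∏_{p ∤ i} i` and `A = ∏_{p ∤ i} (i - N)`. Modulo `p^r ∣ N` we have `A ≡ B`, and `B` is
a unit, so the two signed binomials agree. Negative `k` reduce to the index `N - 1 - k ≥ 0` by the
symmetry of `binom`, since `⌊(N - 1 - k)/p⌋ = n - 1 - q`.
-/
/-- The generalized binomial coefficient for integer entries: for `k ≥ 0` it is
`n(n-1)⋯(n-k+1)/k!`; for `k < 0` and `n - k ≥ 0` it is `binom n (n-k)`; and it is `0`
when `k < 0` and `n - k < 0`. -/
def binom (n k : ℤ) : ℤ :=
  if 0 ≤ k then (∏ i ∈ Finset.range k.toNat, (n - (i : ℤ))) / (k.toNat.factorial : ℤ)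
  else if 0 ≤ n - k then
    (∏ i ∈ Finset.range (n - k).toNat, (n - (i : ℤ))) / ((n - k).toNat.factorial : ℤ)
  else 0

open Finset
open scoped Nat

theorem Finset.prod_Icc_eq_prod_not_dvd_mul_prod_multiples {M : Type*} [CommMonoid M]
    {p : ℕ} (hp : 0 < p) (k : ℕ) (f : ℕ → M) :
    ∏ i ∈ Icc 1 k, f i =
      (∏ i ∈ Icc 1 k with ¬p ∣ i, f i) * ∏ j ∈ Icc 1 (k / p), f (p * j) := by
  have hmultiples : {i ∈ Icc 1 k | p ∣ i} = (Icc 1 (k / p)).image (p * ·) := by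
    ext i
    simp only [mem_filter, mem_Icc, mem_image, Nat.le_div_iff_mul_le hp]
    constructor
    · rintro ⟨⟨h1, hk⟩, j, rfl⟩
      exact ⟨j, ⟨pos_of_mul_pos_right h1 hp.le, by linarith⟩, rfl⟩
    · rintro ⟨j, ⟨hj, hjk⟩, rfl⟩
      exact ⟨⟨by nlinarith, by linarith⟩, dvd_mul_right p j⟩
  rw [← prod_filter_mul_prod_filter_not _ (p ∣ ·), mul_comm, hmultiples,
    prod_image fun _ _ _ _ h => Nat.eq_of_mul_eq_mul_left hp h]

theorem Int.fdiv_mul_sub_one_sub {p : ℤ} (hp : 0 < p) (c k : ℤ) :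
    (p * c - 1 - k).fdiv p = c - 1 - k.fdiv p := by
  rw [Int.fdiv_eq_ediv_of_nonneg _ hp.le, Int.fdiv_eq_ediv_of_nonneg _ hp.le,
    Int.ediv_eq_iff_of_pos hp]
  have := Int.mul_ediv_add_emod k p
  have := Int.emod_nonneg k hp.ne'
  have := Int.emod_lt_of_pos k hp
  constructor <;> linarith

theorem prod_Icc_sub_eq_factorial_mul_neg_one_pow_mul_choose (n : ℤ) (k : ℕ) :
    ∏ i ∈ Icc 1 k, ((i : ℤ) - n) = k ! * ((-1) ^ k * Ring.choose (n - 1) k) := by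
  have hdesc :
      ∏ i ∈ Icc 1 k, ((i : ℤ) - n) = (-1) ^ k * (descPochhammer ℤ k).eval (n - 1) := by
    induction k with
    | zero => simp
    | succ k ih =>
      rw [prod_Icc_succ_top (by omega), ih, descPochhammer_succ_eval]
      push_cast
      ring
  rw [hdesc, Polynomial.eval_eq_smeval, Ring.descPochhammer_eq_factorial_smul_choose, nsmul_eq_mul]
  ring

theorem prod_Icc_sub_mul_eq_prod_not_dvd_mul {p : ℕ} (hp : 0 < p) (c : ℤ) (k : ℕ) :
    ∏ i ∈ Icc 1 k, ((i : ℤ) - p * c) =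
      (∏ i ∈ Icc 1 k with ¬p ∣ i, ((i : ℤ) - p * c)) *
        (p ^ (k / p) * ∏ j ∈ Icc 1 (k / p), ((j : ℤ) - c)) := by
  rw [prod_Icc_eq_prod_not_dvd_mul_prod_multiples hp]
  congr 1
  simp_rw [Nat.cast_mul, ← mul_sub, prod_mul_distrib, prod_const, Nat.card_Icc,
    Nat.add_sub_cancel]

theorem neg_one_pow_mul_choose_modEq {p : ℕ} (hp : p.Prime) {r : ℕ} {n : ℤ}
    (hn : (p : ℤ) ^ r ∣ p * n) (k : ℕ) :
    (-1) ^ k * Ring.choose (p * n - 1) k ≡ (-1) ^ (k / p) * Ring.choose (n - 1) (k / p)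
      [ZMOD p ^ r] := by
  have hfactorial (j : ℕ) : (j ! : ℤ) = ∏ i ∈ Icc 1 j, (i : ℤ) := by
    rw [← Finset.Ico_add_one_right_eq_Icc, ← prod_Ico_id_eq_factorial]
    push_cast
    rfl
  have hsplit := prod_Icc_sub_mul_eq_prod_not_dvd_mul hp.pos n k
  have hsplit₀ := prod_Icc_sub_mul_eq_prod_not_dvd_mul hp.pos 0 k
  simp only [mul_zero, sub_zero, ← hfactorial] at hsplit₀
  rw [prod_Icc_sub_eq_factorial_mul_neg_one_pow_mul_choose,
    prod_Icc_sub_eq_factorial_mul_neg_one_pow_mul_choose] at hsplit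
  set q := k / p
  set B := ∏ i ∈ Icc 1 k with ¬p ∣ i, (i : ℤ)
  set A := ∏ i ∈ Icc 1 k with ¬p ∣ i, ((i : ℤ) - p * n)
  set X := (-1) ^ k * Ring.choose (p * n - 1) k
  set Y := (-1) ^ q * Ring.choose (n - 1) q
  have hexact : B * X = A * Y := by
    have : (p : ℤ) ^ q * q ! ≠ 0 := by have := hp.pos; positivity
    apply mul_left_cancel₀ this
    linear_combination hsplit - X * hsplit₀
  have hAB : A ≡ B [ZMOD p ^ r] :=
    Int.ModEq.prod fun i _ => (Int.modEq_iff_dvd.mpr (by simpa using hn)).symm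
  have hB : IsCoprime ((p : ℤ) ^ r) B := by
    refine IsCoprime.pow_left (IsCoprime.prod_right fun i hi => ?_)
    exact Nat.isCoprime_iff_coprime.mpr ((hp.coprime_iff_not_dvd).mpr (mem_filter.mp hi).2)
  have hBXY : B * X ≡ B * Y [ZMOD p ^ r] := hexact ▸ hAB.mul_right Y
  have hdvd : (p : ℤ) ^ r ∣ B * (Y - X) := by
    rw [mul_sub]
    exact Int.modEq_iff_dvd.mp hBXY
  exact Int.modEq_iff_dvd.mpr (hB.dvd_of_dvd_mul_left hdvd)

/- `(p n - 1) - (n - 1) = (p - 1) n` is odd only for `p = 2` and odd `n`; then `2 ^ r ∣ 2 n`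
forces `r ≤ 1`, and any two signs agree modulo `2`. -/
theorem negOnePow_mul_sub_one_modEq {p : ℕ} (hp : p.Prime) {r : ℕ} {n : ℤ}
    (hn : (p : ℤ) ^ r ∣ p * n) :
    ((p * n - 1).negOnePow : ℤ) ≡ (n - 1).negOnePow [ZMOD p ^ r] := by
  have of_even (h : Even (((p : ℤ) - 1) * n)) :
      ((p * n - 1).negOnePow : ℤ) ≡ (n - 1).negOnePow [ZMOD p ^ r] := by
    rw [(Int.negOnePow_eq_iff (p * n - 1) (n - 1)).mpr (by convert h using 1; ring)]
  rcases hp.eq_two_or_odd' with rfl | hodd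
  · rcases le_or_gt r 1 with hr | hr
    · refine Int.ModEq.of_dvd (by simpa using pow_dvd_pow (2 : ℤ) hr) ?_
      rcases Int.units_eq_one_or (2 * n - 1).negOnePow with h₁ | h₁ <;>
        rcases Int.units_eq_one_or (n - 1).negOnePow with h₂ | h₂ <;>
        simp only [Nat.cast_ofNat, h₁, h₂] <;> decide
    · have : (2 : ℤ) ^ 2 ∣ 2 * n := (pow_dvd_pow 2 hr).trans (by simpa using hn)
      exact of_even (by simpa using even_iff_two_dvd.mpr (by omega : (2 : ℤ) ∣ n))
  · exact of_even ((Int.odd_coe_nat p |>.mpr hodd).sub_odd odd_one |>.mul_right n)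

theorem binom_natCast (n : ℤ) (k : ℕ) : binom n k = Ring.choose n k := by
  rw [binom, if_pos (Int.natCast_nonneg k), Int.toNat_natCast,
    ← descPochhammer_eval_eq_prod_range, Polynomial.eval_eq_smeval,
    Ring.descPochhammer_eq_factorial_smul_choose, nsmul_eq_mul,
    Int.mul_ediv_cancel_left _ (by exact_mod_cast k.factorial_ne_zero)]

theorem binom_of_neg {n k : ℤ} (hk : k < 0) (h : 0 ≤ n - k) : binom n k = binom n (n - k) := by
  simp only [binom, if_neg hk.not_ge, if_pos h]

theorem binom_of_neg_of_sub_neg {n k : ℤ} (hk : k < 0) (h : n - k < 0) : binom n k = 0 := by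
  simp only [binom, if_neg hk.not_ge, if_neg h.not_ge]

theorem binom_mul_negOnePow_of_neg {n k : ℤ} (hk : k < 0) (h : 0 ≤ n - k) :
    binom n k * k.negOnePow = n.negOnePow * (binom n (n - k) * (n - k).negOnePow) := by
  have : (k.negOnePow : ℤ) = n.negOnePow * (n - k).negOnePow := by
    rw [← Units.val_mul, ← Int.negOnePow_sub, sub_sub_cancel]
  rw [binom_of_neg hk h, this]
  ring

theorem binom_mul_negOnePow_modEq_of_nonneg {p : ℕ} (hp : p.Prime) {r : ℕ} {n : ℤ}
    (hn : (p : ℤ) ^ r ∣ p * n) {k : ℤ} (hk : 0 ≤ k) :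
    binom (p * n - 1) k * k.negOnePow ≡ binom (n - 1) (k.fdiv p) * (k.fdiv p).negOnePow
      [ZMOD p ^ r] := by
  lift k to ℕ using hk
  rw [← Int.ofNat_fdiv, binom_natCast, binom_natCast, Int.coe_negOnePow_natCast,
    Int.coe_negOnePow_natCast, mul_comm, mul_comm (Ring.choose _ _)]
  exact neg_one_pow_mul_choose_modEq hp hn k

theorem binom_mul_negOnePow_modEq {p : ℕ} (hp : p.Prime) {r : ℕ} {n : ℤ}
    (hn : (p : ℤ) ^ r ∣ p * n) (k : ℤ) :
    binom (p * n - 1) k * k.negOnePow ≡ binom (n - 1) (k.fdiv p) * (k.fdiv p).negOnePow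
      [ZMOD p ^ r] := by
  have hp₀ : (0 : ℤ) < p := by exact_mod_cast hp.pos
  rcases le_or_gt 0 k with hk | hk
  · exact binom_mul_negOnePow_modEq_of_nonneg hp hn hk
  have hq : k.fdiv p < 0 := Int.fdiv_neg_of_neg_of_pos hk hp₀
  have hcompl := Int.fdiv_mul_sub_one_sub hp₀ n k
  rcases le_or_gt 0 (p * n - 1 - k) with hk' | hk'
  · have hq' : 0 ≤ n - 1 - k.fdiv p := hcompl ▸ Int.fdiv_nonneg hk' hp₀.le
    have hcongr := binom_mul_negOnePow_modEq_of_nonneg hp hn hk'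
    rw [hcompl] at hcongr
    rw [binom_mul_negOnePow_of_neg hk hk', binom_mul_negOnePow_of_neg hq hq']
    exact (negOnePow_mul_sub_one_modEq hp hn).mul hcongr
  · have hq' : n - 1 - k.fdiv p < 0 := hcompl ▸ Int.fdiv_neg_of_neg_of_pos hk' hp₀
    rw [binom_of_neg_of_sub_neg hk hk', binom_of_neg_of_sub_neg hq hq', zero_mul, zero_mul]

/-- For primes `p`, integers `m, k`, and `r ≥ 1`:
`binom(pʳm - 1, k)(-1)^k ≡ binom(p^{r-1}m - 1, ⌊k/p⌋)(-1)^{⌊k/p⌋} (mod pʳ)`. -/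
theorem stmt17 (p : ℕ) (hp : p.Prime) (m k : ℤ) (r : ℕ) (hr : 1 ≤ r) :
    binom ((p : ℤ) ^ r * m - 1) k * (k.negOnePow : ℤ) ≡
      binom ((p : ℤ) ^ (r - 1) * m - 1) (k.fdiv p) * ((k.fdiv p).negOnePow : ℤ)
      [ZMOD (p : ℤ) ^ r] := by
  have hpow : (p : ℤ) ^ r * m = p * ((p : ℤ) ^ (r - 1) * m) := by
    rw [← mul_assoc, ← pow_succ', Nat.sub_add_cancel hr]
  rw [hpow]
  exact binom_mul_negOnePow_modEq hp (hpow ▸ dvd_mul_right _ _) k
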